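/- Let d ≥ 3, p > 1 real, and let g : ℝ^d → [0,∞) be measurable. For q with p + 2/d < q < p(1+2/d), setting m := 3d(d-2)(p-1)/((d+2)p - dq), the following interpolation holds: ∫ g^q dx ≤ (∫ g^{dp/(d-2)} ⟨x⟩^{-3d} dx)^{(d-2)/d} · (∫ g^p dx)^{(q - p - 2/d)/(p-1)} · (∫ g ⟨x⟩^m dx)^{((d+2)p - dq)/(d(p-1))}, where ⟨x⟩ := (1+|x|²)^{1/2} (all integrals assumed finite). -/

import Mathlib

/-!
Write `g^q` pointwise as `f₁^θ₁ f₂^θ₂ f₃^θ₃` with `f₁ = g^(dp/(d-2)) ⟨x⟩^(-3d)`, `f₂ = g^p`,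
`f₃ = g ⟨x⟩^m` and `θ₁ = (d-2)/d`, `θ₂ = (q-p-2/d)/(p-1)`, `θ₃ = ((d+2)p-dq)/(d(p-1))`:
the `θᵢ` are nonnegative exactly in the range `p + 2/d ≤ q ≤ p(1+2/d)`, they sum to `1`,
the powers of `g` add up to `q`, and `m` is chosen so that the powers of `⟨x⟩` cancel.
Hölder's inequality for three functions with exponents `1/θᵢ` then gives the bound.
-/

open Real MeasureTheory Finset

theorem integral_prod_rpow_le {α ι : Type*} [MeasurableSpace α] {μ : Measure α} (s : Finset ι)
    {f : ι → α → ℝ} (hf : ∀ i ∈ s, Integrable (f i) μ) (hf_nonneg : ∀ i ∈ s, 0 ≤ᵐ[μ] f i)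
    {θ : ι → ℝ} (hθ : ∑ i ∈ s, θ i = 1) (hθ_nonneg : ∀ i ∈ s, 0 ≤ θ i) :
    ∫ a, ∏ i ∈ s, f i a ^ θ i ∂μ ≤ ∏ i ∈ s, (∫ a, f i a ∂μ) ^ θ i := by
  have hnn : ∀ᵐ a ∂μ, ∀ i ∈ s, 0 ≤ f i a := (Filter.eventually_all_finset s).2 hf_nonneg
  have hlintegral : ∀ i ∈ s, ∫⁻ a, ENNReal.ofReal (f i a) ∂μ = ENNReal.ofReal (∫ a, f i a ∂μ) :=
    fun i hi ↦ (ofReal_integral_eq_lintegral_ofReal (hf i hi) (hf_nonneg i hi)).symm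
  have hholder := ENNReal.lintegral_prod_norm_pow_le (μ := μ) s
    (fun i hi ↦ (hf i hi).1.aemeasurable.ennreal_ofReal) hθ hθ_nonneg
  rw [prod_congr rfl fun i hi ↦ by rw [hlintegral i hi]] at hholder
  calc ∫ a, ∏ i ∈ s, f i a ^ θ i ∂μ
      = (∫⁻ a, ENNReal.ofReal (∏ i ∈ s, f i a ^ θ i) ∂μ).toReal := by
        refine integral_eq_lintegral_of_nonneg_ae ?_ ?_
        · filter_upwards [hnn] with a ha
          exact prod_nonneg fun i hi ↦ rpow_nonneg (ha i hi) _
        · exact s.aestronglyMeasurable_fun_prod fun i hi ↦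
            ((hf i hi).1.aemeasurable.pow_const _).aestronglyMeasurable
    _ = (∫⁻ a, ∏ i ∈ s, ENNReal.ofReal (f i a) ^ θ i ∂μ).toReal := by
        congr 1
        refine lintegral_congr_ae ?_
        filter_upwards [hnn] with a ha
        rw [ENNReal.ofReal_prod_of_nonneg fun i hi ↦ rpow_nonneg (ha i hi) _]
        exact prod_congr rfl fun i hi ↦
          (ENNReal.ofReal_rpow_of_nonneg (ha i hi) (hθ_nonneg i hi)).symm
    _ ≤ (∏ i ∈ s, ENNReal.ofReal (∫ a, f i a ∂μ) ^ θ i).toReal :=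
        ENNReal.toReal_mono (ENNReal.prod_ne_top fun i hi ↦
          ENNReal.rpow_ne_top_of_nonneg (hθ_nonneg i hi) ENNReal.ofReal_ne_top) hholder
    _ = ∏ i ∈ s, (∫ a, f i a ∂μ) ^ θ i := by
        rw [ENNReal.toReal_prod]
        refine prod_congr rfl fun i hi ↦ ?_
        rw [← ENNReal.toReal_rpow, ENNReal.toReal_ofReal (integral_nonneg_of_ae (hf_nonneg i hi))]

theorem integral_mul_rpow_three_le {α : Type*} [MeasurableSpace α] {μ : Measure α}
    {f₁ f₂ f₃ : α → ℝ} (hf₁ : Integrable f₁ μ) (hf₂ : Integrable f₂ μ) (hf₃ : Integrable f₃ μ)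
    (hf₁_nonneg : 0 ≤ᵐ[μ] f₁) (hf₂_nonneg : 0 ≤ᵐ[μ] f₂) (hf₃_nonneg : 0 ≤ᵐ[μ] f₃)
    {θ₁ θ₂ θ₃ : ℝ} (hθ : θ₁ + θ₂ + θ₃ = 1) (hθ₁ : 0 ≤ θ₁) (hθ₂ : 0 ≤ θ₂) (hθ₃ : 0 ≤ θ₃) :
    ∫ a, f₁ a ^ θ₁ * f₂ a ^ θ₂ * f₃ a ^ θ₃ ∂μ ≤
      (∫ a, f₁ a ∂μ) ^ θ₁ * (∫ a, f₂ a ∂μ) ^ θ₂ * (∫ a, f₃ a ∂μ) ^ θ₃ := by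
  have h := integral_prod_rpow_le (μ := μ) univ (f := ![f₁, f₂, f₃]) (θ := ![θ₁, θ₂, θ₃])
    (by simp [Fin.forall_fin_succ, hf₁, hf₂, hf₃])
    (by simp [Fin.forall_fin_succ, hf₁_nonneg, hf₂_nonneg, hf₃_nonneg])
    (by simpa [Fin.sum_univ_three] using hθ) (by simp [Fin.forall_fin_succ, hθ₁, hθ₂, hθ₃])
  simpa [Fin.prod_univ_three] using h

theorem rpow_interpolation_product_eq {x w a b e₁ e₃ θ₁ θ₂ θ₃ : ℝ} (hx : 0 ≤ x) (hw : 0 < w)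
    (ha : 0 ≤ a) (hb : 0 ≤ b) (hθ₁ : 0 ≤ θ₁) (hθ₂ : 0 ≤ θ₂) (hθ₃ : 0 ≤ θ₃) :
    (x ^ a * w ^ e₁) ^ θ₁ * (x ^ b) ^ θ₂ * (x * w ^ e₃) ^ θ₃ =
      x ^ (a * θ₁ + b * θ₂ + θ₃) * w ^ (e₁ * θ₁ + e₃ * θ₃) := by
  rw [mul_rpow (rpow_nonneg hx _) (rpow_nonneg hw.le _), mul_rpow hx (rpow_nonneg hw.le _),
    ← rpow_mul hx, ← rpow_mul hx, ← rpow_mul hw.le, ← rpow_mul hw.le,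
    rpow_add_of_nonneg hx (by positivity) hθ₃,
    rpow_add_of_nonneg hx (by positivity) (by positivity), rpow_add hw]
  ring

section Exponents

variable {d p q : ℝ}

theorem interpolation_exponents_sum (hd : d ≠ 0) (hp : p - 1 ≠ 0) :
    (d - 2) / d + (q - p - 2 / d) / (p - 1) + ((d + 2) * p - d * q) / (d * (p - 1)) = 1 := by
  field_simp
  ring

theorem interpolation_exponents_base (hd : d ≠ 0) (hd₂ : d - 2 ≠ 0) (hp : p - 1 ≠ 0) :
    d * p / (d - 2) * ((d - 2) / d) + p * ((q - p - 2 / d) / (p - 1)) +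
      ((d + 2) * p - d * q) / (d * (p - 1)) = q := by
  field_simp
  ring

theorem interpolation_exponents_weight {A : ℝ} (hd : d ≠ 0) (hp : p - 1 ≠ 0) (hA : A ≠ 0) :
    1 / 2 * -(3 * d) * ((d - 2) / d) +
      1 / 2 * (3 * d * (d - 2) * (p - 1) / A) * (A / (d * (p - 1))) = 0 := by
  field_simp
  ring

end Exponents

theorem weighted_interpolation_general (d : ℕ) (hd : 3 ≤ d) (p q : ℝ)
    (hp : 1 < p) (hq₁ : p + 2 / d < q) (hq₂ : q < p * (1 + 2 / d))
    (g : EuclideanSpace ℝ (Fin d) → ℝ) (hg : ∀ x, 0 ≤ g x)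
    (h₁ : Integrable (fun x => g x ^ ((d : ℝ) * p / ((d : ℝ) - 2)) *
      (1 + ‖x‖ ^ 2) ^ ((1 : ℝ) / 2 * (-(3 * (d : ℝ))))))
    (h₂ : Integrable (fun x => g x ^ p))
    (h₃ : Integrable (fun x => g x *
      (1 + ‖x‖ ^ 2) ^ ((1 : ℝ) / 2 * (3 * (d : ℝ) * (d - 2) * (p - 1) / (((d : ℝ) + 2) * p - d * q))))) :
    (∫ x, g x ^ q) ≤
      (∫ x, g x ^ ((d : ℝ) * p / ((d : ℝ) - 2)) *
          (1 + ‖x‖ ^ 2) ^ ((1 : ℝ) / 2 * (-(3 * (d : ℝ))))) ^ (((d : ℝ) - 2) / d) *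
      (∫ x, g x ^ p) ^ ((q - p - 2 / d) / (p - 1)) *
      (∫ x, g x *
          (1 + ‖x‖ ^ 2) ^ ((1 : ℝ) / 2 *
            (3 * (d : ℝ) * (d - 2) * (p - 1) / (((d : ℝ) + 2) * p - d * q)))) ^
        ((((d : ℝ) + 2) * p - d * q) / (d * (p - 1))) := by
  have hd₃ : (3 : ℝ) ≤ d := by exact_mod_cast hd
  have hp₁ : 0 < p - 1 := by linarith
  have hA : 0 < ((d : ℝ) + 2) * p - d * q := by
    have hdq := mul_lt_mul_of_pos_left hq₂ (by linarith : (0 : ℝ) < d)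
    have hdp : (d : ℝ) * (p * (1 + 2 / d)) = (d + 2) * p := by field_simp
    linarith
  have hθ₁ : 0 ≤ ((d : ℝ) - 2) / d := div_nonneg (by linarith) (by linarith)
  have hθ₂ : 0 ≤ (q - p - 2 / d) / (p - 1) := div_nonneg (by linarith) hp₁.le
  have hθ₃ : 0 ≤ (((d : ℝ) + 2) * p - d * q) / (d * (p - 1)) := by positivity
  refine (integral_congr_ae (ae_of_all _ fun x ↦ ?_)).trans_le
    (integral_mul_rpow_three_le h₁ h₂ h₃ (ae_of_all _ fun x ↦ by have := hg x; positivity)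
      (ae_of_all _ fun x ↦ rpow_nonneg (hg x) _) (ae_of_all _ fun x ↦ by have := hg x; positivity)
      (interpolation_exponents_sum (by linarith) hp₁.ne') hθ₁ hθ₂ hθ₃)
  rw [rpow_interpolation_product_eq (hg x) (by positivity)
      (div_nonneg (by positivity) (by linarith)) (by linarith) hθ₁ hθ₂ hθ₃,
    interpolation_exponents_base (by linarith) (by linarith) hp₁.ne',
    interpolation_exponents_weight (by linarith) hp₁.ne' hA.ne', rpow_zero, mul_one]

/-- Weighted Hölder interpolation (inequality (star)): for nonnegative measurable `g` on `ℝ^d`,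
`∫ g^q ≤ (∫ g^(dp/(d-2)) ⟨x⟩^(-3d))^((d-2)/d) (∫ g^p)^((q-p-2/d)/(p-1))
  (∫ g ⟨x⟩^m)^(((d+2)p-dq)/(d(p-1)))` with `m = 3d(d-2)(p-1)/((d+2)p - dq)`. -/
theorem weighted_interpolation (d : ℕ) (hd : 3 ≤ d) (p q : ℝ)
    (hp : 1 < p) (hq₁ : p + 2 / d < q) (hq₂ : q < p * (1 + 2 / d))
    (g : EuclideanSpace ℝ (Fin d) → ℝ) (hg_meas : Measurable g) (hg : ∀ x, 0 ≤ g x)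
    (h₁ : Integrable (fun x => g x ^ ((d : ℝ) * p / ((d : ℝ) - 2)) *
      (1 + ‖x‖ ^ 2) ^ ((1 : ℝ) / 2 * (-(3 * (d : ℝ))))))
    (h₂ : Integrable (fun x => g x ^ p))
    (h₃ : Integrable (fun x => g x *
      (1 + ‖x‖ ^ 2) ^ ((1 : ℝ) / 2 * (3 * (d : ℝ) * (d - 2) * (p - 1) / (((d : ℝ) + 2) * p - d * q))))) :
    (∫ x, g x ^ q) ≤
      (∫ x, g x ^ ((d : ℝ) * p / ((d : ℝ) - 2)) *
          (1 + ‖x‖ ^ 2) ^ ((1 : ℝ) / 2 * (-(3 * (d : ℝ))))) ^ (((d : ℝ) - 2) / d) *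
      (∫ x, g x ^ p) ^ ((q - p - 2 / d) / (p - 1)) *
      (∫ x, g x *
          (1 + ‖x‖ ^ 2) ^ ((1 : ℝ) / 2 *
            (3 * (d : ℝ) * (d - 2) * (p - 1) / (((d : ℝ) + 2) * p - d * q)))) ^
        ((((d : ℝ) + 2) * p - d * q) / (d * (p - 1))) :=
  weighted_interpolation_general d hd p q hp hq₁ hq₂ g hg h₁ h₂ h₃
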